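/- Let X be a cyclic flat of M⁺ such that Δγ(X) < 0 and there is some cyclic flat Z_X of M⁺ with Z_X ⊊ X and Δγ(Z_X) > 0. Then there exist cyclic flats Z0, Z1 of M⁺ with Z0 ⊊ X, Z1 ⊊ X, Δγ(Z0) > 0, Δγ(Z1) > 0, and Z0 ∨ Z1 = X. Similarly, if W is a cyclic flat of M⁺ with Δγ(W) > 0, then there exist cyclic flats Z0, Z1 of M⁺ with Z0 ⊊ W, Z1 ⊊ W, Δγ(Z0) < 0, Δγ(Z1) < 0, and Z0 ∨ Z1 = W. -/

import Mathlib

/-!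
Here `M` is the paper's `M⁺`; write `N = M ＼ {e}`. For a cyclic flat `X ∋ e` of `M`, `Δγ` sums
to `-1` over the cyclic flats of `M` below `X`. Indeed `γ` is the Möbius inverse of nullity over
cyclic flats: it sums to `n(F)` below any flat `F` and vanishes on flats that are not cyclic. The
map `Z ↦ Z - e` sends the cyclic flats of `M` below `X` injectively to flats of `N` covering the
cyclic flats of `N` below `X - e`, and `n_M(X) = n_N(X - e) + 1`.

Since `Δγ` vanishes on cyclic flats avoiding `e`, it has all lower sums `-1` on the
join-semilattice of cyclic flats containing `e`, so by Weisner's theorem, for `A ⊊ W` there, `Δγ`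
sums to `0` over the `Z` with `A ∨ Z = W`. This fibre contains `W`, hence also some `Z ≠ W` with
`Δγ(Z)` of the sign opposite to `Δγ(W)`. In the second claim `A` comes from the sum `-1` below `W`.
-/

open Set Matroid
open scoped Classical

namespace Paper

variable {α : Type*}

/-- A circuit of a matroid: a minimal dependent set. -/
def Circuit (M : Matroid α) (C : Set α) : Prop :=
  M.Dep C ∧ ∀ D ⊂ C, M.Indep D

/-- A coloop: an element of the ground set lying in no circuit. -/
def Coloop (M : Matroid α) (x : α) : Prop :=
  x ∈ M.E ∧ ∀ C, Circuit M C → x ∉ C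

/-- The set of coloops of a matroid. -/
def coloops (M : Matroid α) : Set α := {x | Coloop M x}

/-- A cyclic set: a subset of the ground set each of whose elements lies in a
circuit contained in the set (equivalently, the restriction has no coloops). -/
def Cyclic (M : Matroid α) (X : Set α) : Prop :=
  X ⊆ M.E ∧ ∀ x ∈ X, ∃ C, Circuit M C ∧ C ⊆ X ∧ x ∈ C

/-- A cyclic flat: a cyclic set that is also a flat. -/
def CyclicFlat (M : Matroid α) (X : Set α) : Prop :=
  Cyclic M X ∧ M.IsFlat X

/-- The rank of a set: the largest cardinality of an independent subset. -/
noncomputable def rk (M : Matroid α) (X : Set α) : ℕ :=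
  sSup (Set.ncard '' {I | M.Indep I ∧ I ⊆ X})

/-- The nullity of a set: `n(X) = |X| − r(X)`. -/
noncomputable def nullity (M : Matroid α) (X : Set α) : ℤ :=
  (X.ncard : ℤ) - rk M X

/-- Deletion of a single element: `M \ e`. -/
noncomputable def deleteElem (M : Matroid α) (e : α) : Matroid α :=
  M ↾ (M.E \ {e})

variable [Fintype α] [DecidableEq α]

/-- The `γ` function: `γ_M(X) = n(X) − Σ_{Z ∈ Z(M), Z ⊊ X} γ_M(Z)`. -/
noncomputable def gamma (M : Matroid α) (X : Finset α) : ℤ :=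
  nullity M ↑X -
    ∑ Z ∈ (Finset.univ.filter (fun Z : Finset α => CyclicFlat M ↑Z ∧ Z ⊂ X)).attach,
      gamma M Z.1
termination_by X.card
decreasing_by
  exact Finset.card_lt_card (Finset.mem_filter.mp Z.2).2.2

/-- `Δγ(X) = γ_M(X − e) − γ_{M⁺}(X)` where `M = M⁺ \ e`. -/
noncomputable def dgamma (M : Matroid α) (e : α) (X : Finset α) : ℤ :=
  gamma (deleteElem M e) (X.erase e) - gamma M X

end Paper

-- Reopened to drop the `Fintype` and `DecidableEq` section variables of the definitions above.
namespace Paper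

variable {α : Type*}

/-- Weisner's theorem, with `j` playing the role of `(a ⊔ ·)` on `Q`. -/
theorem sum_fiber_join_eq {β G : Type*} [PartialOrder β] [WellFoundedLT β] [DecidableEq β]
    [DecidableLE β] [AddCommGroup G]
    {Q : Finset β} {g : β → G} {c : G} (hg : ∀ w ∈ Q, ∑ x ∈ Q with x ≤ w, g x = c)
    {a : β} (ha : a ∈ Q) {j : β → β} (hjQ : ∀ x ∈ Q, j x ∈ Q) (hle : ∀ x ∈ Q, x ≤ j x)
    (hale : ∀ x ∈ Q, a ≤ j x) (hjle : ∀ x ∈ Q, ∀ w ∈ Q, x ≤ w → a ≤ w → j x ≤ w)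
    {w : β} (hw : w ∈ Q) (haw : a ≤ w) :
    ∑ x ∈ Q with j x = w, g x = if w = a then c else 0 := by
  induction w using WellFoundedLT.induction with
  | _ w ih =>
  set S := {y ∈ Q | a ≤ y ∧ y ≤ w}
  have hfibres : ∑ y ∈ S, ∑ x ∈ Q with j x = y, g x = c := by
    have hmaps : ∀ x ∈ {x ∈ Q | x ≤ w}, j x ∈ S := fun x hx => by
      obtain ⟨hxQ, hxw⟩ := Finset.mem_filter.1 hx
      exact Finset.mem_filter.2 ⟨hjQ x hxQ, hale x hxQ, hjle x hxQ w hw hxw haw⟩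
    rw [← hg w hw, ← Finset.sum_fiberwise_of_maps_to hmaps]
    refine Finset.sum_congr rfl fun y hy => Finset.sum_congr ?_ fun _ _ => rfl
    ext x
    simp only [S, Finset.mem_filter] at hy ⊢
    exact ⟨fun h => ⟨⟨h.1, (hle x h.1).trans (h.2 ▸ hy.2.2)⟩, h.2⟩, fun h => ⟨h.1.1, h.2⟩⟩
  have hlower : ∑ y ∈ S.erase w, ∑ x ∈ Q with j x = y, g x = if a = w then 0 else c := by
    rw [Finset.sum_congr rfl fun y hy => ?_, Finset.sum_ite_eq' (S.erase w) a (fun _ => c)]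
    · simp [S, ha, haw]
    · obtain ⟨hyw, hy⟩ := Finset.mem_erase.1 hy
      obtain ⟨hyQ, hay, hyw'⟩ := Finset.mem_filter.1 hy
      exact ih y (lt_of_le_of_ne hyw' hyw) hyQ hay
  rw [← Finset.add_sum_erase S _ (Finset.mem_filter.2 ⟨hw, haw, le_rfl⟩), hlower] at hfibres
  by_cases h : w = a
  · subst h
    simpa using hfibres
  · simpa [h, Ne.symm h] using hfibres

lemma exists_ne_mul_neg_of_sum_eq_zero {ι R : Type*} [DecidableEq ι] [Ring R] [LinearOrder R]
    [IsStrictOrderedRing R] {s : Finset ι} {f : ι → R} (hs : ∑ x ∈ s, f x = 0) {w : ι}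
    (hw : w ∈ s) (hfw : f w ≠ 0) : ∃ x ∈ s, x ≠ w ∧ f x * f w < 0 := by
  have hneg : ∑ x ∈ s.erase w, f x * f w < ∑ x ∈ s.erase w, 0 := by
    rw [← Finset.sum_mul, Finset.sum_erase_eq_sub hw, hs, zero_sub, neg_mul,
      Finset.sum_const_zero, neg_lt_zero]
    exact mul_self_pos.2 hfw
  obtain ⟨x, hx, hxw⟩ := Finset.exists_lt_of_sum_lt hneg
  exact ⟨x, Finset.mem_of_mem_erase hx, Finset.ne_of_mem_erase hx, hxw⟩

section Matroid

variable {M : Matroid α} {C D F X Y Z : Set α} {e : α}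

lemma circuit_iff_isCircuit : Circuit M C ↔ M.IsCircuit C :=
  isCircuit_iff_forall_ssubset.symm

lemma cyclic_iff : Cyclic M X ↔ X ⊆ M.E ∧ ∀ x ∈ X, ∃ C, M.IsCircuit C ∧ C ⊆ X ∧ x ∈ C := by
  simp only [Cyclic, circuit_iff_isCircuit]

lemma Cyclic.subset_ground (hX : Cyclic M X) : X ⊆ M.E :=
  hX.1

lemma Cyclic.union (hX : Cyclic M X) (hY : Cyclic M Y) : Cyclic M (X ∪ Y) := by
  rw [cyclic_iff] at *
  refine ⟨union_subset hX.1 hY.1, fun x hx => ?_⟩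
  rcases hx with hx | hx
  · obtain ⟨C, hC, hCX, hxC⟩ := hX.2 x hx
    exact ⟨C, hC, hCX.trans subset_union_left, hxC⟩
  · obtain ⟨C, hC, hCY, hxC⟩ := hY.2 x hx
    exact ⟨C, hC, hCY.trans subset_union_right, hxC⟩

lemma Cyclic.closure (hX : Cyclic M X) : Cyclic M (M.closure X) := by
  have hXcl := M.subset_closure X hX.subset_ground
  rw [cyclic_iff] at *
  refine ⟨M.closure_subset_ground X, fun x hx => ?_⟩
  by_cases hxX : x ∈ X
  · obtain ⟨C, hC, hCX, hxC⟩ := hX.2 x hxX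
    exact ⟨C, hC, hCX.trans hXcl, hxC⟩
  · obtain ⟨C, hCX, hC, hxC⟩ := exists_isCircuit_of_mem_closure hx hxX
    exact ⟨C, hC, hCX.trans (insert_subset hx hXcl), hxC⟩

lemma cyclic_delete_iff (hXD : Disjoint X D) : Cyclic (M ＼ D) X ↔ Cyclic M X := by
  have hC : ∀ C ⊆ X, (M ＼ D).IsCircuit C ↔ M.IsCircuit C := fun C hCX =>
    (circuit_iff_delete_of_disjoint (hXD.mono_left hCX)).symm
  simp only [cyclic_iff, delete_ground, subset_sdiff, hXD, and_true]
  refine and_congr_right fun _ => forall₂_congr fun x _ => exists_congr fun C => ?_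
  exact ⟨fun ⟨h, hCX, hxC⟩ => ⟨(hC C hCX).1 h, hCX, hxC⟩,
    fun ⟨h, hCX, hxC⟩ => ⟨(hC C hCX).2 h, hCX, hxC⟩⟩

lemma Cyclic.of_delete (hX : Cyclic (M ＼ D) X) : Cyclic M X :=
  (cyclic_delete_iff (subset_sdiff.1 hX.subset_ground).2).1 hX

lemma cyclicFlat_closure_union (hX : Cyclic M X) (hY : Cyclic M Y) :
    CyclicFlat M (M.closure (X ∪ Y)) :=
  ⟨(hX.union hY).closure, M.isFlat_closure _⟩

lemma CyclicFlat.closure_diff_singleton (hZ : CyclicFlat M Z) (x : α) :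
    M.closure (Z \ {x}) = Z := by
  by_cases hx : x ∈ Z
  · obtain ⟨C, hC, hCZ, hxC⟩ := (cyclic_iff.1 hZ.1).2 x hx
    have hxcl : x ∈ M.closure (Z \ {x}) :=
      M.closure_subset_closure (sdiff_subset_sdiff_left hCZ)
        (hC.mem_closure_sdiff_singleton_of_mem hxC)
    rw [← closure_insert_eq_of_mem_closure hxcl, insert_sdiff_singleton, insert_eq_of_mem hx,
      hZ.2.closure]
  · rw [sdiff_singleton_eq_self hx, hZ.2.closure]

def cyclicCore (M : Matroid α) (Y : Set α) : Set α :=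
  {x | ∃ C, M.IsCircuit C ∧ C ⊆ Y ∧ x ∈ C}

lemma cyclicCore_subset (M : Matroid α) (Y : Set α) : cyclicCore M Y ⊆ Y :=
  fun _ ⟨_, _, hCY, hxC⟩ => hCY hxC

lemma cyclic_cyclicCore (M : Matroid α) (Y : Set α) : Cyclic M (cyclicCore M Y) := by
  refine cyclic_iff.2 ⟨fun x ⟨C, hC, _, hxC⟩ => hC.subset_ground hxC, fun x ⟨C, hC, hCY, hxC⟩ => ?_⟩
  exact ⟨C, hC, fun y hy => ⟨C, hC, hCY, hy⟩, hxC⟩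

lemma Cyclic.subset_cyclicCore (hX : Cyclic M X) (hXY : X ⊆ Y) : X ⊆ cyclicCore M Y := by
  intro x hx
  obtain ⟨C, hC, hCX, hxC⟩ := (cyclic_iff.1 hX).2 x hx
  exact ⟨C, hC, hCX.trans hXY, hxC⟩

lemma isFlat_cyclicCore (hF : M.IsFlat F) : M.IsFlat (cyclicCore M F) := by
  have hK := cyclic_cyclicCore M F
  refine isFlat_iff_closure_eq.2 <| subset_antisymm (hK.closure.subset_cyclicCore ?_)
    (M.subset_closure _ hK.subset_ground)
  exact (M.closure_subset_closure (cyclicCore_subset M F)).trans hF.closure.subset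

lemma isFlat_delete_diff (hF : M.IsFlat F) (D : Set α) : (M ＼ D).IsFlat (F \ D) := by
  refine isFlat_iff_closure_eq.2 <| subset_antisymm ?_ ?_
  · rw [delete_closure_eq, sdiff_sdiff, union_self]
    exact sdiff_subset_sdiff_left ((M.closure_subset_closure sdiff_subset).trans hF.closure.subset)
  · exact (M ＼ D).subset_closure _ (sdiff_subset_sdiff_left hF.subset_ground)

lemma cyclicFlat_delete_iff_of_subset (hF : M.IsFlat F) (hFD : Disjoint F D) (hZF : Z ⊆ F) :
    CyclicFlat (M ＼ D) Z ↔ CyclicFlat M Z := by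
  have hcl : (M ＼ D).closure Z = M.closure Z := by
    rw [delete_closure_eq, (hFD.mono_left hZF).sdiff_eq_left]
    exact (hFD.mono_left ((M.closure_subset_closure hZF).trans hF.closure.subset)).sdiff_eq_left
  rw [CyclicFlat, CyclicFlat, cyclic_delete_iff (hFD.mono_left hZF), isFlat_iff_closure_eq,
    isFlat_iff_closure_eq, hcl]

section Rank

variable [Finite α] {I : Set α}

lemma rk_eq_ncard_of_isBasis' (hI : M.IsBasis' I X) : rk M X = I.ncard := by
  refine IsGreatest.csSup_eq ⟨⟨I, ⟨hI.indep, hI.subset⟩, rfl⟩, ?_⟩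
  rintro _ ⟨J, ⟨hJ, hJX⟩, rfl⟩
  obtain ⟨J', hJ', hJJ'⟩ := hJ.subset_isBasis'_of_subset hJX
  rw [ncard_def, ncard_def, ← hJ'.encard_eq_encard hI]
  exact ENat.toNat_le_toNat (encard_le_encard hJJ') (Set.toFinite J').encard_lt_top.ne

lemma rk_delete_eq (hXD : Disjoint X D) : rk (M ＼ D) X = rk M X := by
  obtain ⟨I, hI⟩ := M.exists_isBasis' X
  rw [rk_eq_ncard_of_isBasis' hI,
    rk_eq_ncard_of_isBasis' (delete_isBasis'_iff.2 (hXD.sdiff_eq_left ▸ hI))]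

lemma rk_diff_singleton_eq (he : e ∈ M.closure (X \ {e})) : rk M (X \ {e}) = rk M X := by
  have hcl : M.closure (X \ {e}) = M.closure X := by
    refine subset_antisymm (M.closure_subset_closure sdiff_subset) ?_
    rw [← closure_insert_eq_of_mem_closure he, insert_sdiff_singleton]
    exact M.closure_subset_closure (subset_insert e X)
  obtain ⟨I, hI⟩ := M.exists_isBasis' (X \ {e})
  have hIX : M.IsBasis' I X := by
    rw [isBasis'_iff_isBasis_closure] at hI ⊢
    exact ⟨hcl ▸ hI.1, hI.2.trans sdiff_subset⟩
  rw [rk_eq_ncard_of_isBasis' hI, rk_eq_ncard_of_isBasis' hIX]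

lemma nullity_delete_diff_singleton_add_one (heX : e ∈ X) (he : e ∈ M.closure (X \ {e})) :
    nullity (M ＼ {e}) (X \ {e}) + 1 = nullity M X := by
  rw [nullity, nullity, rk_delete_eq disjoint_sdiff_left, rk_diff_singleton_eq he,
    ← ncard_sdiff_singleton_add_one heX]
  push_cast
  ring

lemma nullity_cyclicCore (hY : Y ⊆ M.E) : nullity M (cyclicCore M Y) = nullity M Y := by
  set K := cyclicCore M Y
  have hKY : K ⊆ Y := cyclicCore_subset M Y
  obtain ⟨I, hI⟩ := M.exists_isBasis K (hKY.trans hY)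
  have hJ : M.Indep (I ∪ (Y \ K)) := by
    by_contra hdep
    obtain ⟨C, hCJ, hC⟩ := (not_indep_iff (union_subset (hI.subset.trans (hKY.trans hY))
      (sdiff_subset.trans hY))).1 hdep |>.exists_isCircuit_subset
    have hCY : C ⊆ Y := hCJ.trans (union_subset (hI.subset.trans hKY) sdiff_subset)
    have hCK : C ⊆ K := fun x hx => ⟨C, hC, hCY, hx⟩
    have hCI : C ⊆ I := fun x hx => (hCJ hx).resolve_right fun h => h.2 (hCK hx)
    exact hC.not_indep (hI.indep.subset hCI)
  have hJY : M.IsBasis (I ∪ (Y \ K)) Y := by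
    refine hJ.isBasis_of_subset_of_subset_closure (union_subset (hI.subset.trans hKY) sdiff_subset)
      fun y hy => ?_
    by_cases hyK : y ∈ K
    · exact M.closure_subset_closure subset_union_left (hI.subset_closure hyK)
    · exact M.subset_closure _ hJ.subset_ground (Or.inr ⟨hy, hyK⟩)
  have hdisj : Disjoint I (Y \ K) := disjoint_sdiff_right.mono_left hI.subset
  rw [nullity, nullity, rk_eq_ncard_of_isBasis' hI.isBasis', rk_eq_ncard_of_isBasis' hJY.isBasis',
    ncard_union_eq hdisj, ← ncard_sdiff_add_ncard_of_subset hKY]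
  push_cast
  ring

end Rank

end Matroid

section Gamma

variable [Fintype α] [DecidableEq α] {M : Matroid α} {D F : Set α} {e : α} {A W : Finset α}

noncomputable def cyclicFlatsBelow (M : Matroid α) (X : Finset α) : Finset (Finset α) :=
  {Z | CyclicFlat M ↑Z ∧ Z ⊆ X}

@[simp] lemma mem_cyclicFlatsBelow {X Z : Finset α} :
    Z ∈ cyclicFlatsBelow M X ↔ CyclicFlat M ↑Z ∧ Z ⊆ X := by
  simp [cyclicFlatsBelow]

lemma gamma_eq_nullity_sub_sum (M : Matroid α) (X : Finset α) :
    gamma M X = nullity M ↑X - ∑ Z ∈ (cyclicFlatsBelow M X).erase X, gamma M Z := by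
  rw [gamma, Finset.sum_attach _ (gamma M)]
  congr 2
  ext Z
  simp [Finset.ssubset_iff_subset_ne, and_comm, and_assoc]

lemma sum_gamma_cyclicFlatsBelow {X : Finset α} (hX : CyclicFlat M ↑X) :
    ∑ Z ∈ cyclicFlatsBelow M X, gamma M Z = nullity M ↑X := by
  rw [← Finset.add_sum_erase _ _ (mem_cyclicFlatsBelow.2 ⟨hX, subset_rfl⟩),
    gamma_eq_nullity_sub_sum]
  ring

/-- Over a flat `F`, the cyclic flats below `F` are those below its cyclic core, which has the
nullity of `F`. -/
lemma sum_gamma_cyclicFlatsBelow_of_isFlat {F : Finset α} (hF : M.IsFlat ↑F) :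
    ∑ Z ∈ cyclicFlatsBelow M F, gamma M Z = nullity M ↑F := by
  set K := (cyclicCore M ↑F).toFinset
  have hK : (K : Set α) = cyclicCore M ↑F := coe_toFinset _
  have hKF : cyclicFlatsBelow M F = cyclicFlatsBelow M K := by
    ext Z
    simp only [mem_cyclicFlatsBelow, and_congr_right_iff, ← Finset.coe_subset, hK]
    exact fun hZ => ⟨hZ.1.subset_cyclicCore, (·.trans (cyclicCore_subset M ↑F))⟩
  rw [hKF, sum_gamma_cyclicFlatsBelow (hK ▸ ⟨cyclic_cyclicCore M ↑F, isFlat_cyclicCore hF⟩), hK,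
    nullity_cyclicCore hF.subset_ground]

lemma gamma_eq_zero_of_not_cyclic {F : Finset α} (hF : M.IsFlat ↑F) (hnc : ¬ Cyclic M ↑F) :
    gamma M F = 0 := by
  rw [gamma_eq_nullity_sub_sum, Finset.erase_eq_of_notMem (by simp [hnc, CyclicFlat]),
    sum_gamma_cyclicFlatsBelow_of_isFlat hF, sub_self]

lemma gamma_delete_eq_of_subset (hF : M.IsFlat F) (hFD : Disjoint F D) {Y : Finset α}
    (hYF : ↑Y ⊆ F) : gamma (M ＼ D) Y = gamma M Y := by
  induction Y using Finset.strongInduction with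
  | H Y ih =>
  have hbelow : cyclicFlatsBelow (M ＼ D) Y = cyclicFlatsBelow M Y := by
    ext Z
    simp only [mem_cyclicFlatsBelow, and_congr_left_iff]
    exact fun hZY => cyclicFlat_delete_iff_of_subset hF hFD ((Finset.coe_subset.2 hZY).trans hYF)
  rw [gamma_eq_nullity_sub_sum, gamma_eq_nullity_sub_sum, hbelow, nullity, nullity,
    rk_delete_eq (hFD.mono_left hYF)]
  refine congrArg _ (Finset.sum_congr rfl fun Z hZ => ?_)
  obtain ⟨hZY, hZ⟩ := Finset.mem_erase.1 hZ
  have hZY' : Z ⊂ Y := (mem_cyclicFlatsBelow.1 hZ).2.ssubset_of_ne hZY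
  exact ih Z hZY' ((Finset.coe_subset.2 hZY'.subset).trans hYF)

lemma dgamma_eq (M : Matroid α) (e : α) (X : Finset α) :
    dgamma M e X = gamma (M ＼ {e}) (X.erase e) - gamma M X :=
  rfl

lemma mem_of_dgamma_ne_zero {Z : Finset α} (hZ : CyclicFlat M ↑Z) (h : dgamma M e Z ≠ 0) :
    e ∈ Z := by
  by_contra heZ
  refine h ?_
  rw [dgamma_eq, Finset.erase_eq_of_notMem heZ,
    gamma_delete_eq_of_subset hZ.2 (disjoint_singleton_right.2 heZ) subset_rfl, sub_self]

/-- `Z ↦ Z - e` maps the cyclic flats of `M` below `X` injectively onto a family of flats of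
`M ＼ {e}` containing all its cyclic flats below `X - e`; `γ` vanishes on the other flats. -/
lemma sum_gamma_delete_erase {X : Finset α} (hX : CyclicFlat M ↑X) :
    ∑ Z ∈ cyclicFlatsBelow M X, gamma (M ＼ {e}) (Z.erase e) = nullity (M ＼ {e}) ↑(X.erase e) := by
  have hinj : Set.InjOn (fun Z : Finset α => Z.erase e) ↑(cyclicFlatsBelow M X) := by
    intro Z₁ hZ₁ Z₂ hZ₂ h
    rw [Finset.mem_coe, mem_cyclicFlatsBelow] at hZ₁ hZ₂
    rw [← Finset.coe_inj, ← hZ₁.1.closure_diff_singleton e, ← hZ₂.1.closure_diff_singleton e,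
      ← Finset.coe_erase, ← Finset.coe_erase]
    exact congrArg _ (congrArg _ h)
  have hflat : ∀ Z ∈ cyclicFlatsBelow M X, (M ＼ {e}).IsFlat ↑(Z.erase e) := fun Z hZ => by
    rw [Finset.coe_erase]
    exact isFlat_delete_diff (mem_cyclicFlatsBelow.1 hZ).1.2 {e}
  have hsurj :
      cyclicFlatsBelow (M ＼ {e}) (X.erase e) ⊆ (cyclicFlatsBelow M X).image (·.erase e) := by
    intro F hF
    obtain ⟨hFcf, hFX⟩ := mem_cyclicFlatsBelow.1 hF
    have heF : Disjoint (F : Set α) {e} := (subset_sdiff.1 hFcf.1.subset_ground).2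
    refine Finset.mem_image.2 ⟨(M.closure ↑F).toFinset, mem_cyclicFlatsBelow.2 ⟨?_, ?_⟩, ?_⟩
    · rw [coe_toFinset]
      exact ⟨hFcf.1.of_delete.closure, M.isFlat_closure _⟩
    · rw [← Finset.coe_subset, coe_toFinset, ← hX.2.closure]
      exact M.closure_subset_closure ((Finset.coe_subset.2 hFX).trans (by simp))
    · rw [← Finset.coe_inj, Finset.coe_erase, coe_toFinset, ← delete_closure_eq_of_disjoint _ heF,
        hFcf.2.closure]
  rw [← Finset.sum_image (f := gamma (M ＼ {e})) hinj,
    ← sum_gamma_cyclicFlatsBelow_of_isFlat (hflat X (mem_cyclicFlatsBelow.2 ⟨hX, subset_rfl⟩))]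
  refine (Finset.sum_subset hsurj fun F hF hFnot => ?_).symm
  obtain ⟨Z, hZ, rfl⟩ := Finset.mem_image.1 hF
  refine gamma_eq_zero_of_not_cyclic (hflat Z hZ) fun hcyc => hFnot ?_
  exact mem_cyclicFlatsBelow.2 ⟨⟨hcyc, hflat Z hZ⟩,
    Finset.erase_subset_erase e (mem_cyclicFlatsBelow.1 hZ).2⟩

lemma sum_dgamma_cyclicFlatsBelow {X : Finset α} (hX : CyclicFlat M ↑X) (heX : e ∈ X) :
    ∑ Z ∈ cyclicFlatsBelow M X, dgamma M e Z = -1 := by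
  have hecl : e ∈ M.closure (↑X \ {e}) := (hX.closure_diff_singleton e).symm ▸ heX
  simp only [dgamma_eq]
  rw [Finset.sum_sub_distrib, sum_gamma_delete_erase hX, sum_gamma_cyclicFlatsBelow hX,
    ← nullity_delete_diff_singleton_add_one (Finset.mem_coe.2 heX) hecl, Finset.coe_erase]
  ring

noncomputable def cyclicFlatsThrough (M : Matroid α) (e : α) : Finset (Finset α) :=
  {Z | CyclicFlat M ↑Z ∧ e ∈ Z}

@[simp] lemma mem_cyclicFlatsThrough {Z : Finset α} :
    Z ∈ cyclicFlatsThrough M e ↔ CyclicFlat M ↑Z ∧ e ∈ Z := by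
  simp [cyclicFlatsThrough]

lemma sum_dgamma_cyclicFlatsThrough_le {X : Finset α} (hX : CyclicFlat M ↑X) (heX : e ∈ X) :
    ∑ Z ∈ cyclicFlatsThrough M e with Z ≤ X, dgamma M e Z = -1 := by
  have hbelow : {Z ∈ cyclicFlatsThrough M e | Z ≤ X} = {Z ∈ cyclicFlatsBelow M X | e ∈ Z} := by
    ext Z
    simp only [Finset.mem_filter, mem_cyclicFlatsThrough, mem_cyclicFlatsBelow]
    tauto
  rw [hbelow, Finset.sum_filter_of_ne fun Z hZ h =>
    mem_of_dgamma_ne_zero (mem_cyclicFlatsBelow.1 hZ).1 h]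
  exact sum_dgamma_cyclicFlatsBelow hX heX

lemma exists_join_eq_of_dgamma_ne_zero (hW : CyclicFlat M ↑W) (hA : CyclicFlat M ↑A)
    (heA : e ∈ A) (hAW : A ⊂ W) (hW0 : dgamma M e W ≠ 0) :
    ∃ Z : Finset α, CyclicFlat M ↑Z ∧ Z ⊂ W ∧ M.closure (↑A ∪ ↑Z) = ↑W ∧
      dgamma M e Z * dgamma M e W < 0 := by
  set j := fun Z : Finset α => (M.closure (↑A ∪ ↑Z)).toFinset
  have hj : ∀ Z, (j Z : Set α) = M.closure (↑A ∪ ↑Z) := fun Z => coe_toFinset _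
  have hsub_j : ∀ Z ∈ cyclicFlatsThrough M e, A ∪ Z ⊆ j Z := fun Z hZ => by
    rw [← Finset.coe_subset, hj, Finset.coe_union]
    exact M.subset_closure _ (union_subset hA.1.subset_ground
      (mem_cyclicFlatsThrough.1 hZ).1.1.subset_ground)
  have hWQ : W ∈ cyclicFlatsThrough M e := mem_cyclicFlatsThrough.2 ⟨hW, hAW.subset heA⟩
  have hfibre := sum_fiber_join_eq (g := dgamma M e) (j := j)
    (fun X hX => sum_dgamma_cyclicFlatsThrough_le (mem_cyclicFlatsThrough.1 hX).1
      (mem_cyclicFlatsThrough.1 hX).2)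
    (mem_cyclicFlatsThrough.2 ⟨hA, heA⟩)
    (fun Z hZ => mem_cyclicFlatsThrough.2
      ⟨hj Z ▸ cyclicFlat_closure_union hA.1 (mem_cyclicFlatsThrough.1 hZ).1.1,
        Finset.union_subset_left (hsub_j Z hZ) heA⟩)
    (fun Z hZ => Finset.union_subset_right (hsub_j Z hZ))
    (fun Z hZ => Finset.union_subset_left (hsub_j Z hZ))
    (fun Z _ X hX hZX hAX => by
      rw [← Finset.coe_subset, hj, ← (mem_cyclicFlatsThrough.1 hX).1.2.closure]
      exact M.closure_subset_closure (by simp [hZX, hAX]))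
    hWQ hAW.subset
  rw [if_neg hAW.ne'] at hfibre
  have hjW : j W = W := by
    rw [← Finset.coe_inj, hj, union_eq_right.2 (Finset.coe_subset.2 hAW.subset), hW.2.closure]
  obtain ⟨Z, hZ, hZW, hmul⟩ :=
    exists_ne_mul_neg_of_sum_eq_zero hfibre (Finset.mem_filter.2 ⟨hWQ, hjW⟩) hW0
  obtain ⟨hZQ, hjZ⟩ := Finset.mem_filter.1 hZ
  refine ⟨Z, (mem_cyclicFlatsThrough.1 hZQ).1, ?_, by rw [← hj, hjZ], hmul⟩
  exact (hjZ ▸ Finset.union_subset_right (hsub_j Z hZQ)).ssubset_of_ne hZW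

lemma exists_ssubset_dgamma_neg (hW : CyclicFlat M ↑W) (hpos : 0 < dgamma M e W) :
    ∃ A : Finset α, CyclicFlat M ↑A ∧ e ∈ A ∧ A ⊂ W ∧ dgamma M e A < 0 := by
  have hWW : W ∈ cyclicFlatsBelow M W := mem_cyclicFlatsBelow.2 ⟨hW, subset_rfl⟩
  have hlt : ∑ Z ∈ (cyclicFlatsBelow M W).erase W, dgamma M e Z <
      ∑ Z ∈ (cyclicFlatsBelow M W).erase W, 0 := by
    rw [Finset.sum_erase_eq_sub hWW, sum_dgamma_cyclicFlatsBelow hW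
      (mem_of_dgamma_ne_zero hW hpos.ne'), Finset.sum_const_zero]
    linarith
  obtain ⟨A, hA, hAneg⟩ := Finset.exists_lt_of_sum_lt hlt
  obtain ⟨hAW, hA⟩ := Finset.mem_erase.1 hA
  obtain ⟨hAcf, hAsub⟩ := mem_cyclicFlatsBelow.1 hA
  exact ⟨A, hAcf, mem_of_dgamma_ne_zero hAcf hAneg.ne, hAsub.ssubset_of_ne hAW, hAneg⟩

theorem statement_16_general (M : Matroid α) (e : α) :
    (∀ X : Finset α, CyclicFlat M ↑X → dgamma M e X < 0 →
      (∃ ZX : Finset α, CyclicFlat M ↑ZX ∧ ZX ⊂ X ∧ 0 < dgamma M e ZX) →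
      ∃ Z0 Z1 : Finset α, CyclicFlat M ↑Z0 ∧ CyclicFlat M ↑Z1 ∧ Z0 ⊂ X ∧ Z1 ⊂ X ∧
        0 < dgamma M e Z0 ∧ 0 < dgamma M e Z1 ∧
        M.closure (↑Z0 ∪ ↑Z1) = (↑X : Set α)) ∧
    (∀ W : Finset α, CyclicFlat M ↑W → 0 < dgamma M e W →
      ∃ Z0 Z1 : Finset α, CyclicFlat M ↑Z0 ∧ CyclicFlat M ↑Z1 ∧ Z0 ⊂ W ∧ Z1 ⊂ W ∧
        dgamma M e Z0 < 0 ∧ dgamma M e Z1 < 0 ∧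
        M.closure (↑Z0 ∪ ↑Z1) = (↑W : Set α)) := by
  refine ⟨fun X hX hneg ⟨A, hA, hAX, hApos⟩ => ?_, fun W hW hpos => ?_⟩
  · obtain ⟨Z, hZ, hZX, hjoin, hmul⟩ := exists_join_eq_of_dgamma_ne_zero hX hA
      (mem_of_dgamma_ne_zero hA hApos.ne') hAX hneg.ne
    exact ⟨A, Z, hA, hZ, hAX, hZX, hApos, pos_of_mul_neg_left hmul hneg.le, hjoin⟩
  · obtain ⟨A, hA, heA, hAW, hAneg⟩ := exists_ssubset_dgamma_neg hW hpos
    obtain ⟨Z, hZ, hZW, hjoin, hmul⟩ := exists_join_eq_of_dgamma_ne_zero hW hA heA hAW hpos.ne'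
    exact ⟨A, Z, hA, hZ, hAW, hZW, hAneg, neg_of_mul_neg_left hmul hpos.le, hjoin⟩

theorem statement_16 (M : Matroid α) (e : α) (he : e ∈ M.E) :
    (∀ X : Finset α, CyclicFlat M ↑X → dgamma M e X < 0 →
      (∃ ZX : Finset α, CyclicFlat M ↑ZX ∧ ZX ⊂ X ∧ 0 < dgamma M e ZX) →
      ∃ Z0 Z1 : Finset α, CyclicFlat M ↑Z0 ∧ CyclicFlat M ↑Z1 ∧ Z0 ⊂ X ∧ Z1 ⊂ X ∧
        0 < dgamma M e Z0 ∧ 0 < dgamma M e Z1 ∧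
        M.closure (↑Z0 ∪ ↑Z1) = (↑X : Set α)) ∧
    (∀ W : Finset α, CyclicFlat M ↑W → 0 < dgamma M e W →
      ∃ Z0 Z1 : Finset α, CyclicFlat M ↑Z0 ∧ CyclicFlat M ↑Z1 ∧ Z0 ⊂ W ∧ Z1 ⊂ W ∧
        dgamma M e Z0 < 0 ∧ dgamma M e Z1 < 0 ∧
        M.closure (↑Z0 ∪ ↑Z1) = (↑W : Set α)) :=
  statement_16_general M e

end Gamma

end Paper
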